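/- Let X be a probability space, n a positive integer, and f ∈ L²(X^n). Then f admits a generalized Walsh expansion f = Σ_{S ⊆ [n]} F_S, and this expansion is unique: any family (F_S)_{S ⊆ [n]} satisfying the two defining properties is given, for almost every y ∈ X^n, by F_S(y) = Σ_{T ⊆ S} (−1)^{|S∖T|} ∫ f(y_T, x_{[n]∖T}) dx_{[n]∖T}. -/

import Mathlib

/-!
Write `E_T` for integration over the coordinates outside `T`. By Fubini these operators compose as
`E_T ∘ E_U = E_{T ∩ U}`, and `∫ F(update x i t) dt = E_{[n]∖{i}} F`. Hence the two conditions on a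
summand `F_S` give `E_T F_S = F_S` for `S ⊆ T` and `E_T F_S = 0` otherwise, so any expansion
satisfies `E_T f = ∑_{S ⊆ T} F_S` for every `T`. Möbius inversion on the Boolean lattice turns this
into the formula for `F_S`, which gives uniqueness; conversely the Möbius inverse of `T ↦ E_T f`
sums to `E_{[n]} f = f` and, by the same composition rule, is killed by integration in any
coordinate of `S`.
-/

open MeasureTheory Finset Function

theorem MeasureTheory.MeasurePreserving.integral_comp_of_aestronglyMeasurable {X Y E : Type*}
    [MeasurableSpace X] [MeasurableSpace Y] [NormedAddCommGroup E] [NormedSpace ℝ E]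
    {μX : Measure X} {μY : Measure Y} {f : X → Y} (hf : MeasurePreserving f μX μY) {g : Y → E}
    (hg : AEStronglyMeasurable g μY) : ∫ x, g (f x) ∂μX = ∫ y, g y ∂μY := by
  rw [← hf.map_eq] at hg ⊢
  exact (integral_map hf.measurable.aemeasurable hg).symm

theorem norm_integral_sq_le_integral_norm_sq {X E : Type*} [MeasurableSpace X]
    [NormedAddCommGroup E] [NormedSpace ℝ E] [CompleteSpace E] {ν : Measure X}
    [IsProbabilityMeasure ν] {f : X → E} (hf : Integrable f ν)
    (hf2 : Integrable (fun x => ‖f x‖ ^ 2) ν) : ‖∫ x, f x ∂ν‖ ^ 2 ≤ ∫ x, ‖f x‖ ^ 2 ∂ν :=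
  (convexOn_univ_norm.pow (fun _ _ => norm_nonneg _) 2).map_integral_le
    (continuous_norm.pow 2).continuousOn isClosed_univ (.of_forall fun _ => Set.mem_univ _) hf hf2

namespace Finset

variable {ι : Type*} [DecidableEq ι] {β : ι → Type*}

theorem piecewise_piecewise_eq_piecewise_inter (T U : Finset ι) (y z w : ∀ i, β i) :
    U.piecewise (T.piecewise y z) w = (T ∩ U).piecewise y (U.piecewise z w) := by
  ext i
  by_cases hT : i ∈ T <;> by_cases hU : i ∈ U <;> simp [hT, hU]

variable [Fintype ι]

theorem piecewise_compl_singleton (i : ι) (x z : ∀ j, β j) :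
    ({i}ᶜ : Finset ι).piecewise x z = update x i (z i) := by
  ext j
  rcases eq_or_ne j i with rfl | hj <;> simp [*]

end Finset

section Moebius

variable {ι R : Type*} [DecidableEq ι] [CommRing R]

theorem neg_one_pow_succ_sub {m n : ℕ} (h : n ≤ m) : (-1 : R) ^ (m + 1 - n) = -(-1) ^ (m - n) := by
  rw [Nat.succ_sub h, pow_succ, mul_neg_one]

theorem sum_powerset_neg_one_pow_mul_sum_powerset (S : Finset ι) (g : Finset ι → R) :
    ∑ T ∈ S.powerset, (-1 : R) ^ (#S - #T) * ∑ U ∈ T.powerset, g U = g S := by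
  induction S using Finset.induction_on generalizing g with
  | empty => simp
  | insert a S ha ih =>
    rw [sum_powerset_insert ha, ← ih (fun U => g (insert a U)), ← sum_add_distrib]
    refine sum_congr rfl fun T hT => ?_
    have hTS := mem_powerset.1 hT
    have haT : a ∉ T := fun h => ha (hTS h)
    rw [sum_powerset_insert haT, card_insert_of_notMem ha, card_insert_of_notMem haT,
      neg_one_pow_succ_sub (card_le_card hTS), Nat.add_sub_add_right]
    ring

theorem sum_powerset_sum_powerset_neg_one_pow_mul (S : Finset ι) (g : Finset ι → R) :
    ∑ T ∈ S.powerset, ∑ U ∈ T.powerset, (-1 : R) ^ (#T - #U) * g U = g S := by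
  induction S using Finset.induction_on generalizing g with
  | empty => simp
  | insert a S ha ih =>
    rw [sum_powerset_insert ha, ← ih (fun U => g (insert a U)), ← sum_add_distrib]
    refine sum_congr rfl fun T hT => ?_
    have haT : a ∉ T := fun h => ha (mem_powerset.1 hT h)
    have hneg : ∑ U ∈ T.powerset, (-1 : R) ^ (#T + 1 - #U) * g U =
        -∑ U ∈ T.powerset, (-1 : R) ^ (#T - #U) * g U := by
      rw [← sum_neg_distrib]
      refine sum_congr rfl fun U hU => ?_
      rw [neg_one_pow_succ_sub (card_le_card (mem_powerset.1 hU)), neg_mul]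
    have hins : ∑ U ∈ T.powerset, (-1 : R) ^ (#T + 1 - #(insert a U)) * g (insert a U) =
        ∑ U ∈ T.powerset, (-1 : R) ^ (#T - #U) * g (insert a U) := by
      refine sum_congr rfl fun U hU => ?_
      rw [card_insert_of_notMem fun h => haT (mem_powerset.1 hU h), Nat.add_sub_add_right]
    rw [sum_powerset_insert haT, card_insert_of_notMem haT, hneg, hins]
    ring

theorem sum_powerset_neg_one_pow_mul_erase {i : ι} {S : Finset ι} (hi : i ∈ S)
    (g : Finset ι → R) : ∑ T ∈ S.powerset, (-1 : R) ^ (#S - #T) * g (T.erase i) = 0 := by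
  rw [← insert_erase hi, sum_powerset_insert (notMem_erase i S), ← sum_add_distrib]
  refine sum_eq_zero fun T hT => ?_
  have hTS := mem_powerset.1 hT
  have hiT : i ∉ T := fun h => notMem_erase i S (hTS h)
  rw [erase_insert hiT, erase_eq_of_notMem hiT, card_insert_of_notMem (notMem_erase i S),
    card_insert_of_notMem hiT, Nat.add_sub_add_right, neg_one_pow_succ_sub (card_le_card hTS)]
  ring

end Moebius

section

variable {ι : Type*} [Fintype ι] [DecidableEq ι] {α : ι → Type*} [∀ i, MeasurableSpace (α i)]
  (μ : ∀ i, Measure (α i))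

section MeasurePreserving

variable [∀ i, IsProbabilityMeasure (μ i)]

theorem measurePreserving_piecewise (T : Finset ι) :
    MeasurePreserving (fun p : (∀ i, α i) × (∀ i, α i) => T.piecewise p.1 p.2)
      ((Measure.pi μ).prod (Measure.pi μ)) (Measure.pi μ) := by
  have hm : Measurable (fun p : (∀ i, α i) × (∀ i, α i) => T.piecewise p.1 p.2) :=
    measurable_pi_lambda _ fun i => by
      by_cases hi : i ∈ T <;> simp only [Finset.piecewise, hi, if_true, if_false]
      exacts [measurable_fst.eval, measurable_snd.eval]
  refine ⟨hm, (Measure.pi_eq fun s hs => ?_).symm⟩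
  have hpre : (fun p : (∀ i, α i) × (∀ i, α i) => T.piecewise p.1 p.2) ⁻¹' Set.univ.pi s =
      Set.univ.pi (T.piecewise s fun _ => Set.univ) ×ˢ
        Set.univ.pi (T.piecewise (fun _ => Set.univ) s) := by
    ext p
    simp only [Set.mem_preimage, Set.mem_prod, Set.mem_univ_pi, ← forall_and]
    refine forall_congr' fun i => ?_
    by_cases hi : i ∈ T <;> simp [hi]
  rw [Measure.map_apply hm (.univ_pi hs), hpre, Measure.prod_prod, Measure.pi_pi, Measure.pi_pi,
    ← prod_mul_distrib]
  refine prod_congr rfl fun i _ => ?_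
  by_cases hi : i ∈ T <;> simp [hi]

theorem measurePreserving_update (i : ι) :
    MeasurePreserving (fun p : α i × (∀ j, α j) => update p.2 i p.1)
      ((μ i).prod (Measure.pi μ)) (Measure.pi μ) := by
  have hm : Measurable (fun p : α i × (∀ j, α j) => update p.2 i p.1) :=
    measurable_update'.comp (measurable_snd.prodMk measurable_fst)
  refine ⟨hm, (Measure.pi_eq fun s hs => ?_).symm⟩
  have hpre : (fun p : α i × (∀ j, α j) => update p.2 i p.1) ⁻¹' Set.univ.pi s =
      s i ×ˢ Set.univ.pi (update s i Set.univ) := by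
    ext ⟨t, x⟩
    simp only [Set.mem_preimage, Set.mem_prod, Set.mem_univ_pi]
    constructor
    · intro h
      refine ⟨by simpa using h i, fun j => ?_⟩
      rcases eq_or_ne j i with rfl | hj
      · simp
      · simpa [hj] using h j
    · rintro ⟨ht, hx⟩ j
      rcases eq_or_ne j i with rfl | hj
      · simpa using ht
      · simpa [hj] using hx j
  have hupd : ∀ j, μ j (update s i Set.univ j) = update (fun j => μ j (s j)) i 1 j := fun j => by
    rcases eq_or_ne j i with rfl | hj <;> simp [*]
  rw [Measure.map_apply hm (.univ_pi hs), hpre, Measure.prod_prod, Measure.pi_pi,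
    Fintype.prod_congr _ _ hupd, prod_update_of_mem (mem_univ i), one_mul,
    prod_eq_mul_prod_sdiff_singleton_of_mem (mem_univ i)]

variable {μ} in
theorem MeasureTheory.Integrable.comp_piecewise {E : Type*} [NormedAddCommGroup E]
    {g : (∀ i, α i) → E} (hg : Integrable g (Measure.pi μ)) (T : Finset ι) :
    Integrable (fun p : (∀ i, α i) × (∀ i, α i) => g (T.piecewise p.1 p.2))
      ((Measure.pi μ).prod (Measure.pi μ)) :=
  (measurePreserving_piecewise μ T).integrable_comp_of_integrable hg

end MeasurePreserving

section IntegralOutside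

variable {E : Type*} [NormedAddCommGroup E] [NormedSpace ℝ E]

/-- The paper's `∫ g(y_T, x_{[n]∖T}) dx_{[n]∖T}`: integrating over all of `x` changes nothing,
since the coordinates of `x` in `T` are never read. -/
noncomputable def integralOutside (T : Finset ι) (g : (∀ i, α i) → E) (y : ∀ i, α i) : E :=
  ∫ x, g (T.piecewise y x) ∂Measure.pi μ

theorem dependsOn_integralOutside (T : Finset ι) (g : (∀ i, α i) → E) :
    DependsOn (integralOutside μ T g) T := fun y y' h => by
  simp only [integralOutside]
  congr! 3 with x
  exact T.piecewise_congr (fun i hi => h i hi) fun _ _ => rfl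

theorem integralOutside_const_mul {𝕜 : Type*} [RCLike 𝕜] (c : 𝕜) (T : Finset ι)
    (g : (∀ i, α i) → 𝕜) :
    integralOutside μ T (fun y => c * g y) = fun y => c * integralOutside μ T g y := by
  ext y
  exact integral_const_mul c _

variable [∀ i, IsProbabilityMeasure (μ i)] {μ}

theorem integralOutside_of_dependsOn [CompleteSpace E] {g : (∀ i, α i) → E} {S T : Finset ι}
    (hg : DependsOn g S) (hST : S ⊆ T) : integralOutside μ T g = g := by
  ext y
  have hconst : ∀ x, g (T.piecewise y x) = g y := fun x =>
    hg fun i hi => T.piecewise_eq_of_mem _ _ (hST hi)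
  simp [integralOutside, hconst]

theorem integralOutside_univ [CompleteSpace E] (g : (∀ i, α i) → E) :
    integralOutside μ univ g = g :=
  integralOutside_of_dependsOn (coe_univ (α := ι) ▸ dependsOn_univ g) subset_rfl

theorem integrable_integralOutside {g : (∀ i, α i) → E} (hg : Integrable g (Measure.pi μ))
    (T : Finset ι) : Integrable (integralOutside μ T g) (Measure.pi μ) :=
  (hg.comp_piecewise T).integral_prod_left

theorem integralOutside_congr_ae {g g' : (∀ i, α i) → E} (h : g =ᵐ[Measure.pi μ] g')
    (T : Finset ι) : integralOutside μ T g =ᵐ[Measure.pi μ] integralOutside μ T g' := by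
  have h' := (measurePreserving_piecewise μ T).quasiMeasurePreserving.ae h
  filter_upwards [Measure.ae_ae_of_ae_prod h'] with y hy
  exact integral_congr_ae hy

theorem integralOutside_finsetSum {κ : Type*} {s : Finset κ} {F : κ → (∀ i, α i) → E}
    (hF : ∀ k ∈ s, Integrable (F k) (Measure.pi μ)) (T : Finset ι) :
    ∀ᵐ y ∂Measure.pi μ, integralOutside μ T (fun x => ∑ k ∈ s, F k x) y =
      ∑ k ∈ s, integralOutside μ T (F k) y := by
  have h : ∀ᵐ y ∂Measure.pi μ, ∀ k ∈ s,
      Integrable (fun x => F k (T.piecewise y x)) (Measure.pi μ) :=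
    (Finset.eventually_all s).2 fun k hk => ((hF k hk).comp_piecewise T).prod_right_ae
  filter_upwards [h] with y hy
  simp only [integralOutside]
  exact integral_finsetSum s hy

theorem integralOutside_integralOutside [CompleteSpace E] {g : (∀ i, α i) → E}
    (hg : Integrable g (Measure.pi μ)) (T U : Finset ι) :
    integralOutside μ T (integralOutside μ U g) =ᵐ[Measure.pi μ] integralOutside μ (T ∩ U) g := by
  have hpw := measurePreserving_piecewise μ U
  filter_upwards [(hg.comp_piecewise (T ∩ U)).prod_right_ae] with y hy
  calc integralOutside μ T (integralOutside μ U g) y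
      = ∫ z, ∫ w, g ((T ∩ U).piecewise y (U.piecewise z w)) ∂Measure.pi μ ∂Measure.pi μ := by
        simp only [integralOutside, piecewise_piecewise_eq_piecewise_inter]
    _ = ∫ p, g ((T ∩ U).piecewise y (U.piecewise p.1 p.2)) ∂(Measure.pi μ).prod (Measure.pi μ) :=
        (integral_prod _ (hpw.integrable_comp_of_integrable hy)).symm
    _ = integralOutside μ (T ∩ U) g y := hpw.integral_comp_of_aestronglyMeasurable hy.1

theorem integral_update_ae_eq_integralOutside {g : (∀ i, α i) → E}
    (hg : Integrable g (Measure.pi μ)) (i : ι) :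
    ∀ᵐ x ∂Measure.pi μ, ∫ t, g (update x i t) ∂μ i = integralOutside μ {i}ᶜ g x := by
  filter_upwards [((measurePreserving_update μ i).integrable_comp_of_integrable hg).prod_left_ae]
    with x hx
  simp only [integralOutside, piecewise_compl_singleton]
  exact ((measurePreserving_eval μ i).integral_comp_of_aestronglyMeasurable
    (g := fun t => g (update x i t)) hx.1).symm

theorem memLp_integralOutside [CompleteSpace E] {g : (∀ i, α i) → E}
    (hg : MemLp g 2 (Measure.pi μ)) (T : Finset ι) :
    MemLp (integralOutside μ T g) 2 (Measure.pi μ) := by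
  have hpw := measurePreserving_piecewise μ T
  have hsm : AEStronglyMeasurable (integralOutside μ T g) (Measure.pi μ) :=
    (hg.1.comp_quasiMeasurePreserving hpw.quasiMeasurePreserving).integral_prod_right'
  have hsq : Integrable (fun y => ‖g y‖ ^ 2) (Measure.pi μ) :=
    (memLp_two_iff_integrable_sq_norm hg.1).1 hg
  refine (memLp_two_iff_integrable_sq_norm hsm).2
    ((hsq.comp_piecewise T).integral_prod_left.mono' (hsm.norm.pow 2) ?_)
  filter_upwards [((hg.integrable one_le_two).comp_piecewise T).prod_right_ae,
    (hsq.comp_piecewise T).prod_right_ae] with y hy hy2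
  rw [Real.norm_of_nonneg (by positivity)]
  exact norm_integral_sq_le_integral_norm_sq hy hy2

theorem integralOutside_ae_eq_zero_of_integral_update [CompleteSpace E] {g : (∀ i, α i) → E}
    (hg : Integrable g (Measure.pi μ)) {i : ι}
    (hi : ∀ᵐ x ∂Measure.pi μ, ∫ t, g (update x i t) ∂μ i = 0) {T : Finset ι} (hiT : i ∉ T) :
    integralOutside μ T g =ᵐ[Measure.pi μ] 0 := by
  have hT : T ∩ {i}ᶜ = T := inter_eq_left.2 (subset_compl_singleton.2 hiT)
  have hzero : integralOutside μ {i}ᶜ g =ᵐ[Measure.pi μ] 0 := by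
    filter_upwards [integral_update_ae_eq_integralOutside hg i, hi] with x h₁ h₂
    rw [← h₁, h₂, Pi.zero_apply]
  calc integralOutside μ T g
      = integralOutside μ (T ∩ {i}ᶜ) g := by rw [hT]
    _ =ᵐ[Measure.pi μ] integralOutside μ T (integralOutside μ {i}ᶜ g) :=
        (integralOutside_integralOutside hg T {i}ᶜ).symm
    _ =ᵐ[Measure.pi μ] integralOutside μ T 0 := integralOutside_congr_ae hzero T
    _ = 0 := by ext; simp [integralOutside]

theorem integralOutside_ae_eq_sum_powerset [CompleteSpace E] {f : (∀ i, α i) → E}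
    {F : Finset ι → (∀ i, α i) → E} (hF : ∀ S, Integrable (F S) (Measure.pi μ))
    (hdep : ∀ S, DependsOn (F S) S)
    (hkill : ∀ S, ∀ i ∈ S, ∀ᵐ x ∂Measure.pi μ, ∫ t, F S (update x i t) ∂μ i = 0)
    (hsum : ∀ᵐ x ∂Measure.pi μ, f x = ∑ S, F S x) (T : Finset ι) :
    ∀ᵐ y ∂Measure.pi μ, integralOutside μ T f y = ∑ S ∈ T.powerset, F S y := by
  have hterm : ∀ S, ∀ᵐ y ∂Measure.pi μ,
      integralOutside μ T (F S) y = if S ⊆ T then F S y else 0 := by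
    intro S
    by_cases hST : S ⊆ T
    · simp [hST, integralOutside_of_dependsOn (hdep S) hST]
    · obtain ⟨i, hiS, hiT⟩ := not_subset.1 hST
      simpa [hST, Filter.EventuallyEq] using
        integralOutside_ae_eq_zero_of_integral_update (hF S) (hkill S i hiS) hiT
  filter_upwards [integralOutside_congr_ae hsum T, integralOutside_finsetSum (fun S _ => hF S) T,
    (Finset.eventually_all univ).2 fun S _ => hterm S] with y h₁ h₂ h₃
  rw [h₁, h₂, sum_congr rfl h₃, ← sum_filter]
  congr 1
  ext S
  simp

end IntegralOutside

section Walsh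

variable {𝕜 : Type*} [RCLike 𝕜]

noncomputable def walshComponent (f : (∀ i, α i) → 𝕜) (S : Finset ι) (y : ∀ i, α i) : 𝕜 :=
  ∑ T ∈ S.powerset, (-1 : 𝕜) ^ (#S - #T) * integralOutside μ T f y

theorem dependsOn_walshComponent (f : (∀ i, α i) → 𝕜) (S : Finset ι) :
    DependsOn (walshComponent μ f S) S := fun y y' h =>
  sum_congr rfl fun T hT => by
    rw [(dependsOn_integralOutside μ T f).mono (coe_subset.2 (mem_powerset.1 hT)) h]

variable [∀ i, IsProbabilityMeasure (μ i)]

theorem sum_walshComponent (f : (∀ i, α i) → 𝕜) (y : ∀ i, α i) :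
    ∑ S, walshComponent μ f S y = f y := by
  rw [← powerset_univ]
  simp only [walshComponent]
  rw [sum_powerset_sum_powerset_neg_one_pow_mul univ (fun T => integralOutside μ T f y),
    integralOutside_univ]

variable {μ}

theorem memLp_walshComponent {f : (∀ i, α i) → 𝕜} (hf : MemLp f 2 (Measure.pi μ))
    (S : Finset ι) : MemLp (walshComponent μ f S) 2 (Measure.pi μ) :=
  memLp_finsetSum S.powerset fun T _ => (memLp_integralOutside hf T).const_mul _

theorem integrable_walshComponent {f : (∀ i, α i) → 𝕜} (hf : Integrable f (Measure.pi μ))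
    (S : Finset ι) : Integrable (walshComponent μ f S) (Measure.pi μ) :=
  integrable_finsetSum S.powerset fun T _ => (integrable_integralOutside hf T).const_mul _

theorem integral_update_walshComponent {f : (∀ i, α i) → 𝕜} (hf : Integrable f (Measure.pi μ))
    {i : ι} {S : Finset ι} (hi : i ∈ S) :
    ∀ᵐ x ∂Measure.pi μ, ∫ t, walshComponent μ f S (update x i t) ∂μ i = 0 := by
  have hterms : ∀ T ∈ S.powerset, Integrable
      (fun y => (-1 : 𝕜) ^ (#S - #T) * integralOutside μ T f y) (Measure.pi μ) :=
    fun T _ => (integrable_integralOutside hf T).const_mul _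
  have herase : ∀ T : Finset ι, {i}ᶜ ∩ T = T.erase i := fun T => by
    rw [inter_comm, ← sdiff_eq_inter_compl, erase_eq]
  filter_upwards [integral_update_ae_eq_integralOutside (integrable_walshComponent hf S) i,
    integralOutside_finsetSum hterms {i}ᶜ,
    (Finset.eventually_all S.powerset).2 fun T _ => integralOutside_integralOutside hf {i}ᶜ T]
    with x h₁ h₂ h₃
  have hW : walshComponent μ f S =
      fun y => ∑ T ∈ S.powerset, (-1 : 𝕜) ^ (#S - #T) * integralOutside μ T f y := rfl
  rw [h₁, hW, h₂]
  simp only [integralOutside_const_mul]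
  rw [← sum_powerset_neg_one_pow_mul_erase hi fun T => integralOutside μ T f x]
  exact sum_congr rfl fun T hT => by rw [h₃ T hT, herase]

theorem ae_eq_walshComponent {f : (∀ i, α i) → 𝕜} {F : Finset ι → (∀ i, α i) → 𝕜}
    (hF : ∀ S, Integrable (F S) (Measure.pi μ)) (hdep : ∀ S, DependsOn (F S) S)
    (hkill : ∀ S, ∀ i ∈ S, ∀ᵐ x ∂Measure.pi μ, ∫ t, F S (update x i t) ∂μ i = 0)
    (hsum : ∀ᵐ x ∂Measure.pi μ, f x = ∑ S, F S x) (S : Finset ι) :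
    F S =ᵐ[Measure.pi μ] walshComponent μ f S := by
  filter_upwards [(Finset.eventually_all S.powerset).2 fun T _ =>
    integralOutside_ae_eq_sum_powerset hF hdep hkill hsum T] with y hy
  calc F S y = ∑ T ∈ S.powerset, (-1 : 𝕜) ^ (#S - #T) * ∑ U ∈ T.powerset, F U y :=
        (sum_powerset_neg_one_pow_mul_sum_powerset S (F · y)).symm
    _ = walshComponent μ f S y := sum_congr rfl fun T hT => by rw [hy T hT]

end Walsh

end

theorem walsh_expansion_exists_unique_general {Ω : Type*} [MeasurableSpace Ω] (μ : Measure Ω)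
    [IsProbabilityMeasure μ] (n : ℕ) (f : (Fin n → Ω) → ℂ)
    (hf : MemLp f 2 (Measure.pi fun _ : Fin n => μ)) :
    (∃ F : Finset (Fin n) → ((Fin n → Ω) → ℂ),
      (∀ S, MemLp (F S) 2 (Measure.pi fun _ : Fin n => μ)) ∧
      (∀ S : Finset (Fin n), ∀ x y : Fin n → Ω, (∀ i ∈ S, x i = y i) → F S x = F S y) ∧
      (∀ S : Finset (Fin n), ∀ i ∈ S, ∀ᵐ x ∂(Measure.pi fun _ : Fin n => μ),
        ∫ t, F S (Function.update x i t) ∂μ = 0) ∧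
      (∀ᵐ x ∂(Measure.pi fun _ : Fin n => μ), f x = ∑ S : Finset (Fin n), F S x)) ∧
    (∀ F : Finset (Fin n) → ((Fin n → Ω) → ℂ),
      (∀ S, MemLp (F S) 2 (Measure.pi fun _ : Fin n => μ)) →
      (∀ S : Finset (Fin n), ∀ x y : Fin n → Ω, (∀ i ∈ S, x i = y i) → F S x = F S y) →
      (∀ S : Finset (Fin n), ∀ i ∈ S, ∀ᵐ x ∂(Measure.pi fun _ : Fin n => μ),
        ∫ t, F S (Function.update x i t) ∂μ = 0) →
      (∀ᵐ x ∂(Measure.pi fun _ : Fin n => μ), f x = ∑ S : Finset (Fin n), F S x) →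
      ∀ S : Finset (Fin n), ∀ᵐ y ∂(Measure.pi fun _ : Fin n => μ),
        F S y = ∑ T ∈ S.powerset, (-1 : ℂ) ^ (S.card - T.card) *
          ∫ x, f (fun i => if i ∈ T then y i else x i)
            ∂(Measure.pi fun _ : Fin n => μ)) := by
  refine ⟨⟨walshComponent (fun _ => μ) f, memLp_walshComponent hf,
    fun S _ _ h => dependsOn_walshComponent _ f S h,
    fun S i hi => integral_update_walshComponent (hf.integrable one_le_two) hi,
    .of_forall fun x => (sum_walshComponent _ f x).symm⟩, ?_⟩
  intro F hF hdep hkill hsum S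
  exact ae_eq_walshComponent (fun S => (hF S).integrable one_le_two)
    (fun S _ _ h => hdep S _ _ h) hkill hsum S

/-- **Existence and uniqueness of the generalized Walsh expansion.**
Every `f ∈ L²(Xⁿ)` admits an expansion `f = Σ_{S ⊆ [n]} F_S` where each `F_S` depends only on
the coordinates in `S` and integrates to `0` in each coordinate `i ∈ S`; moreover any such
family is a.e. given by the explicit formula
`F_S(y) = Σ_{T ⊆ S} (-1)^{|S∖T|} ∫ f(y_T, x_{[n]∖T}) dx_{[n]∖T}`. -/
theorem walsh_expansion_exists_unique {Ω : Type*} [MeasurableSpace Ω] (μ : Measure Ω)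
    [IsProbabilityMeasure μ] (n : ℕ) (hn : 0 < n) (f : (Fin n → Ω) → ℂ)
    (hf : MemLp f 2 (Measure.pi fun _ : Fin n => μ)) :
    (∃ F : Finset (Fin n) → ((Fin n → Ω) → ℂ),
      (∀ S, MemLp (F S) 2 (Measure.pi fun _ : Fin n => μ)) ∧
      (∀ S : Finset (Fin n), ∀ x y : Fin n → Ω, (∀ i ∈ S, x i = y i) → F S x = F S y) ∧
      (∀ S : Finset (Fin n), ∀ i ∈ S, ∀ᵐ x ∂(Measure.pi fun _ : Fin n => μ),
        ∫ t, F S (Function.update x i t) ∂μ = 0) ∧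
      (∀ᵐ x ∂(Measure.pi fun _ : Fin n => μ), f x = ∑ S : Finset (Fin n), F S x)) ∧
    (∀ F : Finset (Fin n) → ((Fin n → Ω) → ℂ),
      (∀ S, MemLp (F S) 2 (Measure.pi fun _ : Fin n => μ)) →
      (∀ S : Finset (Fin n), ∀ x y : Fin n → Ω, (∀ i ∈ S, x i = y i) → F S x = F S y) →
      (∀ S : Finset (Fin n), ∀ i ∈ S, ∀ᵐ x ∂(Measure.pi fun _ : Fin n => μ),
        ∫ t, F S (Function.update x i t) ∂μ = 0) →
      (∀ᵐ x ∂(Measure.pi fun _ : Fin n => μ), f x = ∑ S : Finset (Fin n), F S x) →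
      ∀ S : Finset (Fin n), ∀ᵐ y ∂(Measure.pi fun _ : Fin n => μ),
        F S y = ∑ T ∈ S.powerset, (-1 : ℂ) ^ (S.card - T.card) *
          ∫ x, f (fun i => if i ∈ T then y i else x i)
            ∂(Measure.pi fun _ : Fin n => μ)) :=
  walsh_expansion_exists_unique_general μ n f hf
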